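/- Let n ≥ 1 and ξ₁,…,ξₙ : [0,1] → ℝ continuously differentiable with ξⱼ'(s) ≥ λ for all j, s, where λ ∈ ℝ. Define the probability measures P and Q on the ordered simplex Δₙ with densities proportional to exp(Σⱼ ξⱼ(tⱼ)) and exp(λ Σⱼ tⱼ) respectively. Then for all 1 ≤ i ≤ n and t ∈ [0,1]: P({𝐭 ∈ Δₙ : tᵢ ≤ t}) ≤ Q({𝐭 ∈ Δₙ : tᵢ ≤ t}). -/

import Mathlib

/-!
Write `gⱼ = exp ξⱼ` and `hⱼ = exp (λ ·)`; the hypothesis `ξⱼ' ≥ λ` says that each ratio `gⱼ / hⱼ`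
is nondecreasing. For weights `g₁, …, gₘ` put `G(u) = ∫_{a < x₁ < ⋯ < xₘ < u} ∏ⱼ gⱼ(xⱼ) dx`.
Integrating out the top coordinate gives `G(u) = ∫ₐᵘ gₘ(s) G₋(s) ds`, where `G₋` is the same
integral for the first `m - 1` weights, so one inducts on the dimension. Let `G'` and `H'` arise
from `G` and `H` by multiplying the `k`-th weight by the indicator of `(-∞, t]`. Two properties
pass from `G₋, H₋` to `G, H`: the ratio `G / H` is nondecreasing, and
  `G'(x) H(y) + G'(y) H(x) ≤ G(x) H'(y) + G(y) H'(x)`   for all `x, y`.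
Writing products of integrals as double integrals and pairing `(s, r)` with `(r, s)`, both become
pointwise rearrangement inequalities, because `g / h` is nondecreasing and the indicator is
nonincreasing. (When `k < m` the step also uses the off-diagonal consequence
`G'(r) H(s) ≤ G(r) H'(s)` for `s ≤ r`, which follows from the diagonal case and the monotonicity of
`H' / H`.) At `x = y = 1` the displayed inequality is `P(tₖ ≤ t) ≤ Q(tₖ ≤ t)` cleared of
denominators.
-/

open Set Real MeasureTheory

def orderedSimplex (n : ℕ) : Set (Fin n → ℝ) :=
  {t | (∀ j, t j ∈ Set.Icc (0:ℝ) 1) ∧ StrictMono t}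

open Function
open scoped ENNReal

/-- `f / g` is nondecreasing, cross-multiplied so that zeros and `∞` need no special care. -/
def MonotoneRatio {α : Type*} [Preorder α] (f g : α → ℝ≥0∞) : Prop :=
  ∀ ⦃u v⦄, u ≤ v → f u * g v ≤ f v * g u

/-- `F' / F ≤ G' / G`, in a form symmetrised over two points. -/
def SymmRatioLE {α : Type*} (F F' G G' : α → ℝ≥0∞) : Prop :=
  ∀ x y, F' x * G y + F' y * G x ≤ F x * G' y + F y * G' x

lemma mul_add_mul_le_mul_add_mul_of_add_le {α β X Y X' Y' : ℝ≥0∞} (hαβ : α ≤ β)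
    (hsum : X + Y ≤ X' + Y') (hY : Y ≤ Y') : α * X + β * Y ≤ α * X' + β * Y' := by
  obtain ⟨d, rfl⟩ := exists_add_of_le hαβ
  calc α * X + (α + d) * Y = α * (X + Y) + d * Y := by ring
    _ ≤ α * (X' + Y') + d * Y' := by gcongr
    _ = α * X' + (α + d) * Y' := by ring

namespace MonotoneRatio

variable {α : Type*} [Preorder α] {f g f' g' : α → ℝ≥0∞}

lemma refl (f : α → ℝ≥0∞) : MonotoneRatio f f := fun _ _ _ => (mul_comm _ _).le

lemma mul (h : MonotoneRatio f g) (h' : MonotoneRatio f' g') :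
    MonotoneRatio (f * f') (g * g') := fun u v huv =>
  calc f u * f' u * (g v * g' v) = (f u * g v) * (f' u * g' v) := by ring
    _ ≤ (f v * g u) * (f' v * g' u) := mul_le_mul' (h huv) (h' huv)
    _ = f v * f' v * (g u * g' u) := by ring

end MonotoneRatio

lemma Antitone.monotoneRatio_mul {α : Type*} [Preorder α] {φ : α → ℝ≥0∞} (hφ : Antitone φ)
    (f : α → ℝ≥0∞) : MonotoneRatio f (φ * f) := fun u v huv =>
  calc f u * (φ v * f v) = φ v * (f u * f v) := by ring
    _ ≤ φ u * (f u * f v) := by gcongr; exact hφ huv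
    _ = f v * (φ u * f u) := by ring

namespace SymmRatioLE

variable {α : Type*} {F F' G G' : α → ℝ≥0∞}

lemma of_le [LinearOrder α]
    (h : ∀ x y, x ≤ y → F' x * G y + F' y * G x ≤ F x * G' y + F y * G' x) :
    SymmRatioLE F F' G G' := by
  intro x y
  rcases le_total x y with hxy | hyx
  · exact h x y hxy
  · rw [add_comm, add_comm (F x * G' y)]
    exact h y x hyx

lemma diag (h : SymmRatioLE F F' G G') (x : α) : F' x * G x ≤ F x * G' x := by
  have h2 := h x x
  rw [← two_mul, ← two_mul] at h2
  exact (ENNReal.mul_le_mul_iff_right two_ne_zero ENNReal.ofNat_ne_top).1 h2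

lemma cross [Preorder α] (h : SymmRatioLE F F' G G') (hG : MonotoneRatio G G')
    (hmono : Monotone G) (hfin : ∀ x, G x ≠ ∞) {s r : α} (hsr : s ≤ r) :
    F' r * G s ≤ F r * G' s := by
  rcases eq_or_ne (G r) 0 with h0 | h0
  · have : G s = 0 := le_antisymm (h0 ▸ hmono hsr) zero_le
    simp [this]
  refine (ENNReal.mul_le_mul_iff_left h0 (hfin r)).1 ?_
  calc F' r * G s * G r = F' r * G r * G s := by ring
    _ ≤ F r * G' r * G s := by gcongr ?_ * _; exact h.diag r
    _ = F r * (G s * G' r) := by ring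
    _ ≤ F r * (G r * G' s) := by gcongr _ * ?_; exact hG hsr
    _ = F r * G' s * G r := by ring

lemma mul_of_monotoneRatio [LinearOrder α] (h : SymmRatioLE F F' G G')
    (hcross : ∀ ⦃s r⦄, s ≤ r → F' r * G s ≤ F r * G' s) {f g : α → ℝ≥0∞}
    (hfg : MonotoneRatio f g) : SymmRatioLE (f * F) (f * F') (g * G) (g * G') :=
  of_le fun s r hsr =>
    calc f s * F' s * (g r * G r) + f r * F' r * (g s * G s)
        = (f s * g r) * (F' s * G r) + (f r * g s) * (F' r * G s) := by ring
      _ ≤ (f s * g r) * (F s * G' r) + (f r * g s) * (F r * G' s) :=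
        mul_add_mul_le_mul_add_mul_of_add_le (hfg hsr) (h s r) (hcross hsr)
      _ = f s * F s * (g r * G' r) + f r * F r * (g s * G' s) := by ring

end SymmRatioLE

lemma MonotoneRatio.symmRatioLE_mul_of_antitone {α : Type*} [LinearOrder α]
    {A B φ : α → ℝ≥0∞} (hAB : MonotoneRatio A B) (hφ : Antitone φ) :
    SymmRatioLE A (φ * A) B (φ * B) :=
  SymmRatioLE.of_le fun s r hsr =>
    calc φ s * A s * B r + φ r * A r * B s = φ r * (A r * B s) + φ s * (A s * B r) := by ring
      _ ≤ φ r * (A s * B r) + φ s * (A r * B s) :=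
        mul_add_mul_le_mul_add_mul_of_add_le (hφ hsr) (add_comm _ _).le (hAB hsr)
      _ = A s * (φ r * B r) + A r * (φ s * B s) := by ring

section Cumulative

variable {μ : Measure ℝ} {A A' B B' : ℝ → ℝ≥0∞}

lemma MonotoneRatio.setLIntegral_Ioo (hAB : MonotoneRatio A B) (hA : Measurable A)
    (hB : Measurable B) (a : ℝ) :
    MonotoneRatio (fun u => ∫⁻ s in Ioo a u, A s ∂μ) (fun u => ∫⁻ s in Ioo a u, B s ∂μ) := by
  intro u v huv
  rcases le_or_gt u a with hua | hau
  · simp [Ioo_eq_empty (not_lt.2 hua)]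
  have hdisj : Disjoint (Ioo a u) (Ico u v) :=
    disjoint_left.2 fun _ hr hs => hr.2.not_ge hs.1
  simp only [← Ioo_union_Ico_eq_Ioo hau huv, lintegral_union measurableSet_Ico hdisj,
    mul_add, add_mul]
  gcongr _ + ?_
  rw [mul_comm (∫⁻ s in Ico u v, A s ∂μ), ← lintegral_lintegral_mul hA.aemeasurable
    hB.aemeasurable, ← lintegral_lintegral_mul hB.aemeasurable hA.aemeasurable]
  refine setLIntegral_mono' measurableSet_Ioo fun r hr => setLIntegral_mono' measurableSet_Ico
    fun s hs => ?_
  rw [mul_comm (B r)]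
  exact hAB (hr.2.trans_le hs.1).le

lemma lintegral_mul_add_lintegral_mul {u v : ℝ → ℝ≥0∞} (hu : Measurable u) (hv : Measurable v)
    (I J : Set ℝ) :
    (∫⁻ r in I, u r ∂μ) * (∫⁻ s in J, v s ∂μ) + (∫⁻ r in I, v r ∂μ) * (∫⁻ s in J, u s ∂μ)
      = ∫⁻ r in I, ∫⁻ s in J, (u r * v s + v r * u s) ∂μ ∂μ := by
  have inner : ∀ r, ∫⁻ s in J, (u r * v s + v r * u s) ∂μ
      = u r * (∫⁻ s in J, v s ∂μ) + v r * ∫⁻ s in J, u s ∂μ := fun r => by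
    rw [lintegral_add_left (hv.const_mul _), lintegral_const_mul _ hv, lintegral_const_mul _ hu]
  simp only [inner]
  rw [lintegral_add_left (hu.mul_const _), lintegral_mul_const _ hu, lintegral_mul_const _ hv]

lemma SymmRatioLE.setLIntegral_Ioo (h : SymmRatioLE A A' B B') (hA : Measurable A)
    (hA' : Measurable A') (hB : Measurable B) (hB' : Measurable B') (a : ℝ) :
    SymmRatioLE (fun u => ∫⁻ s in Ioo a u, A s ∂μ) (fun u => ∫⁻ s in Ioo a u, A' s ∂μ)
      (fun u => ∫⁻ s in Ioo a u, B s ∂μ) (fun u => ∫⁻ s in Ioo a u, B' s ∂μ) := by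
  intro x y
  dsimp only
  rw [mul_comm (∫⁻ s in Ioo a y, A' s ∂μ), mul_comm (∫⁻ s in Ioo a y, A s ∂μ),
    lintegral_mul_add_lintegral_mul hA' hB, lintegral_mul_add_lintegral_mul hA hB']
  refine lintegral_mono fun r => lintegral_mono fun s => ?_
  calc A' r * B s + B r * A' s = A' r * B s + A' s * B r := by ring
    _ ≤ A r * B' s + A s * B' r := h r s
    _ = A r * B' s + B' r * A s := by ring

end Cumulative

def openSimplex (m : ℕ) (a b : ℝ) : Set (Fin m → ℝ) :=
  {x | (∀ j, x j ∈ Ioo a b) ∧ StrictMono x}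

noncomputable def simplexIntegral (m : ℕ) (g : Fin m → ℝ → ℝ≥0∞) (a b : ℝ) : ℝ≥0∞ :=
  ∫⁻ x in openSimplex m a b, ∏ j, g j (x j)

section Simplex

variable {m : ℕ}

lemma isOpen_setOf_mem_openSimplex (m : ℕ) (a : ℝ) :
    IsOpen {p : ℝ × (Fin m → ℝ) | p.2 ∈ openSimplex m a p.1} := by
  have hc : ∀ j : Fin m, Continuous fun p : ℝ × (Fin m → ℝ) => p.2 j :=
    fun j => (continuous_apply j).comp continuous_snd
  change IsOpen {p : ℝ × (Fin m → ℝ) | (∀ j, p.2 j ∈ Ioo a p.1) ∧ StrictMono p.2}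
  simp only [StrictMono, mem_Ioo, ofPred_and, ofPred_forall]
  exact (isOpen_iInter_of_finite fun j => (isOpen_lt continuous_const (hc j)).inter
      (isOpen_lt (hc j) continuous_fst)).inter
    (isOpen_iInter_of_finite fun j => isOpen_iInter_of_finite fun j' =>
      isOpen_iInter_of_finite (ι := j < j') fun _ => isOpen_lt (hc j) (hc j'))

lemma isOpen_openSimplex (m : ℕ) (a b : ℝ) : IsOpen (openSimplex m a b) :=
  (isOpen_setOf_mem_openSimplex m a).preimage (continuous_const.prodMk continuous_id)

lemma openSimplex_nonempty (m : ℕ) {a b : ℝ} (hab : a < b) : (openSimplex m a b).Nonempty := by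
  have hδ : 0 < (b - a) / (m + 1) := div_pos (sub_pos.2 hab) (by positivity)
  refine ⟨fun j => a + (j + 1) * ((b - a) / (m + 1)),
    fun j => ⟨lt_add_of_pos_right _ (by positivity), ?_⟩, fun j j' hjj' => ?_⟩
  · have hj : (j : ℝ) + 1 ≤ m := by exact_mod_cast j.isLt
    calc a + (j + 1) * ((b - a) / (m + 1)) ≤ a + m * ((b - a) / (m + 1)) := by gcongr
      _ < a + (m + 1) * ((b - a) / (m + 1)) := by gcongr; linarith
      _ = b := by field_simp; ring
  · have : (j : ℝ) < j' := by exact_mod_cast hjj'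
    dsimp only
    gcongr

lemma openSimplex_subset_openSimplex {a u v : ℝ} (huv : u ≤ v) :
    openSimplex m a u ⊆ openSimplex m a v :=
  fun _ hx => ⟨fun j => ⟨(hx.1 j).1, (hx.1 j).2.trans_le huv⟩, hx.2⟩

lemma snoc_mem_openSimplex_iff {a u s : ℝ} {y : Fin m → ℝ} :
    Fin.snoc (α := fun _ => ℝ) y s ∈ openSimplex (m + 1) a u ↔
      s ∈ Ioo a u ∧ y ∈ openSimplex m a s := by
  constructor
  · rintro ⟨hmem, hmono⟩
    have hs := hmem (Fin.last m)
    have hy := fun j => hmem (Fin.castSucc j)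
    have hys := fun j => hmono (Fin.castSucc_lt_last j)
    simp only [Fin.snoc_last, Fin.snoc_castSucc] at hs hy hys
    refine ⟨hs, fun j => ⟨(hy j).1, hys j⟩, fun j j' hjj' => ?_⟩
    simpa using hmono (Fin.castSucc_lt_castSucc_iff.2 hjj')
  · rintro ⟨hs, hy, hymono⟩
    refine ⟨fun j => ?_, fun j j' hjj' => ?_⟩
    · induction j using Fin.lastCases with
      | last => simpa using hs
      | cast j => simpa using ⟨(hy j).1, (hy j).2.trans hs.2⟩
    · induction j' using Fin.lastCases with
      | last =>
        obtain ⟨j, rfl⟩ := Fin.exists_castSucc_eq.2 hjj'.ne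
        simpa using (hy j).2
      | cast j' =>
        obtain ⟨j, rfl⟩ := Fin.exists_castSucc_eq.2 (hjj'.trans (Fin.castSucc_lt_last j')).ne
        simpa using hymono (Fin.castSucc_lt_castSucc_iff.1 hjj')

lemma measurable_indicator_openSimplex {f : (Fin m → ℝ) → ℝ≥0∞} (hf : Measurable f) (a : ℝ) :
    Measurable fun p : ℝ × (Fin m → ℝ) => (openSimplex m a p.1).indicator f p.2 :=
  (hf.comp measurable_snd).indicator (isOpen_setOf_mem_openSimplex m a).measurableSet

lemma measurable_prod_apply {g : Fin m → ℝ → ℝ≥0∞} (hg : ∀ j, Measurable (g j)) :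
    Measurable fun x : Fin m → ℝ => ∏ j, g j (x j) :=
  Finset.measurable_prod _ fun j _ => (hg j).comp (measurable_pi_apply j)

lemma measurable_simplexIntegral {g : Fin m → ℝ → ℝ≥0∞} (hg : ∀ j, Measurable (g j)) (a : ℝ) :
    Measurable (simplexIntegral m g a) := by
  have : simplexIntegral m g a = fun u => ∫⁻ x, (openSimplex m a u).indicator
      (fun x => ∏ j, g j (x j)) x :=
    funext fun u => (lintegral_indicator (isOpen_openSimplex m a u).measurableSet _).symm
  rw [this]
  exact (measurable_indicator_openSimplex (measurable_prod_apply hg) a).lintegral_prod_right'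

lemma monotone_simplexIntegral (g : Fin m → ℝ → ℝ≥0∞) (a : ℝ) :
    Monotone (simplexIntegral m g a) :=
  fun _ _ huv => lintegral_mono_set (openSimplex_subset_openSimplex huv)

lemma simplexIntegral_zero (g : Fin 0 → ℝ → ℝ≥0∞) (a b : ℝ) : simplexIntegral 0 g a b = 1 := by
  simp [simplexIntegral, openSimplex, Subsingleton.strictMono, volume_pi, Measure.pi_empty_univ]

lemma indicator_openSimplex_snoc (g : Fin (m + 1) → ℝ → ℝ≥0∞) (a u s : ℝ) (y : Fin m → ℝ) :
    (openSimplex (m + 1) a u).indicator (fun x => ∏ j, g j (x j)) (Fin.snoc y s) =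
      (Ioo a u).indicator (g (Fin.last m)) s *
        (openSimplex m a s).indicator (fun y => ∏ j, Fin.init g j (y j)) y := by
  classical
  simp only [indicator_apply, snoc_mem_openSimplex_iff, Fin.prod_univ_castSucc,
    Fin.snoc_castSucc, Fin.snoc_last, Fin.init]
  split_ifs <;> simp_all [mul_comm]

lemma simplexIntegral_succ (g : Fin (m + 1) → ℝ → ℝ≥0∞) (hg : ∀ j, Measurable (g j))
    (a u : ℝ) : simplexIntegral (m + 1) g a u =
      ∫⁻ s in Ioo a u, g (Fin.last m) s * simplexIntegral m (Fin.init g) a s := by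
  have hinit : Measurable fun y : Fin m → ℝ => ∏ j, Fin.init g j (y j) :=
    measurable_prod_apply fun _ => hg _
  have hsimplex : ∀ s, MeasurableSet (openSimplex m a s) :=
    fun s => (isOpen_openSimplex m a s).measurableSet
  have hΦ : Measurable fun p : ℝ × (Fin m → ℝ) => (Ioo a u).indicator (g (Fin.last m)) p.1 *
      (openSimplex m a p.1).indicator (fun y => ∏ j, Fin.init g j (y j)) p.2 :=
    (((hg _).indicator measurableSet_Ioo).comp measurable_fst).mul
      (measurable_indicator_openSimplex hinit a)
  have he : ∀ p : ℝ × (Fin m → ℝ),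
      (MeasurableEquiv.piFinSuccAbove (fun _ => ℝ) (Fin.last m)).symm p = Fin.snoc p.2 p.1 :=
    fun p => by
      simp only [MeasurableEquiv.piFinSuccAbove_symm_apply, Fin.insertNthEquiv_last]
      rfl
  calc simplexIntegral (m + 1) g a u
      = ∫⁻ p : ℝ × (Fin m → ℝ), (Ioo a u).indicator (g (Fin.last m)) p.1 *
          (openSimplex m a p.1).indicator (fun y => ∏ j, Fin.init g j (y j)) p.2
          ∂(volume.prod volume) := by
        rw [simplexIntegral, ← lintegral_indicator (isOpen_openSimplex _ _ _).measurableSet,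
          ← Measure.volume_eq_prod,
          ← ((volume_preserving_piFinSuccAbove (fun _ => ℝ) (Fin.last m)).symm _).lintegral_comp_emb
            (MeasurableEquiv.measurableEmbedding _)]
        simp only [he, indicator_openSimplex_snoc]
    _ = ∫⁻ s, (Ioo a u).indicator (g (Fin.last m)) s * simplexIntegral m (Fin.init g) a s := by
        rw [lintegral_prod _ hΦ.aemeasurable]
        refine lintegral_congr fun s => ?_
        dsimp only
        rw [lintegral_const_mul _ (hinit.indicator (hsimplex s)),
          lintegral_indicator (hsimplex s), simplexIntegral]
    _ = _ := by
        rw [← lintegral_indicator measurableSet_Ioo]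
        exact lintegral_congr fun s => by simp only [indicator_mul_left]

lemma simplexIntegral_ne_top {h : Fin m → ℝ → ℝ≥0∞} {C : ℝ≥0∞} (hC : C ≠ ∞)
    (hhC : ∀ j s, h j s ≤ C) (a b : ℝ) : simplexIntegral m h a b ≠ ∞ := by
  have hsub : openSimplex m a b ⊆ Icc (fun _ => a) (fun _ => b) :=
    fun x hx => ⟨fun j => (hx.1 j).1.le, fun j => (hx.1 j).2.le⟩
  refine ne_of_lt ?_
  calc simplexIntegral m h a b ≤ ∫⁻ _ in openSimplex m a b, C ^ m :=
        lintegral_mono fun x => (Finset.prod_le_prod' fun j _ => hhC j (x j)).trans_eq (by simp)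
    _ = C ^ m * volume (openSimplex m a b) := setLIntegral_const _ _
    _ < ∞ := ENNReal.mul_lt_top (ENNReal.pow_lt_top hC.lt_top)
        ((measure_mono hsub).trans_lt isCompact_Icc.measure_lt_top)

end Simplex

section Induction

variable {m : ℕ} {g h : Fin m → ℝ → ℝ≥0∞}

lemma measurable_update_mul (hg : ∀ j, Measurable (g j)) {φ : ℝ → ℝ≥0∞} (hφ : Measurable φ)
    (k : Fin m) : ∀ j, Measurable (update g k (φ * g k) j) :=
  (forall_update_iff g fun _ f => Measurable f).2 ⟨hφ.mul (hg k), fun j _ => hg j⟩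

theorem monotoneRatio_simplexIntegral (hg : ∀ j, Measurable (g j)) (hh : ∀ j, Measurable (h j))
    (hgh : ∀ j, MonotoneRatio (g j) (h j)) (a : ℝ) :
    MonotoneRatio (simplexIntegral m g a) (simplexIntegral m h a) := by
  induction m with
  | zero => simpa only [funext (simplexIntegral_zero _ a)] using MonotoneRatio.refl _
  | succ m ih =>
    rw [funext (simplexIntegral_succ g hg a), funext (simplexIntegral_succ h hh a)]
    exact ((hgh _).mul (ih (fun _ => hg _) (fun _ => hh _) (fun _ => hgh _))).setLIntegral_Ioo
      ((hg _).mul (measurable_simplexIntegral (fun _ => hg _) a))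
      ((hh _).mul (measurable_simplexIntegral (fun _ => hh _) a)) a

theorem symmRatioLE_simplexIntegral_update (hg : ∀ j, Measurable (g j))
    (hh : ∀ j, Measurable (h j)) (hgh : ∀ j, MonotoneRatio (g j) (h j)) {C : ℝ≥0∞}
    (hC : C ≠ ∞) (hhC : ∀ j s, h j s ≤ C) {φ : ℝ → ℝ≥0∞} (hφm : Measurable φ)
    (hφ : Antitone φ) (k : Fin m) (a : ℝ) :
    SymmRatioLE (simplexIntegral m g a) (simplexIntegral m (update g k (φ * g k)) a)
      (simplexIntegral m h a) (simplexIntegral m (update h k (φ * h k)) a) := by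
  induction m with
  | zero => exact k.elim0
  | succ m ih =>
    have hsucc : ∀ f : Fin (m + 1) → ℝ → ℝ≥0∞, (∀ j, Measurable (f j)) →
        simplexIntegral (m + 1) f a =
          fun u => ∫⁻ s in Ioo a u, (f (Fin.last m) * simplexIntegral m (Fin.init f) a) s :=
      fun f hf => funext (simplexIntegral_succ f hf a)
    have hmeas : ∀ f : Fin (m + 1) → ℝ → ℝ≥0∞, (∀ j, Measurable (f j)) →
        Measurable (f (Fin.last m) * simplexIntegral m (Fin.init f) a) :=
      fun f hf => (hf _).mul (measurable_simplexIntegral (fun _ => hf _) a)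
    have hg' := measurable_update_mul hg hφm k
    have hh' := measurable_update_mul hh hφm k
    rw [hsucc g hg, hsucc h hh, hsucc _ hg', hsucc _ hh']
    refine SymmRatioLE.setLIntegral_Ioo ?_ (hmeas g hg) (hmeas _ hg') (hmeas h hh)
      (hmeas _ hh') a
    rcases Fin.eq_castSucc_or_eq_last k with ⟨k, rfl⟩ | rfl
    · simp only [update_of_ne (Fin.castSucc_lt_last k).ne', Fin.init_update_castSucc]
      have hinit := ih (g := Fin.init g) (h := Fin.init h) (fun _ => hg _) (fun _ => hh _)
        (fun _ => hgh _) (fun _ => hhC _) k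
      have hratio : MonotoneRatio (simplexIntegral m (Fin.init h) a)
          (simplexIntegral m (update (Fin.init h) k (φ * Fin.init h k)) a) :=
        monotoneRatio_simplexIntegral (fun _ => hh _) (measurable_update_mul (fun _ => hh _) hφm k)
          ((forall_update_iff _ fun j f => MonotoneRatio (Fin.init h j) f).2
            ⟨hφ.monotoneRatio_mul _, fun _ _ => MonotoneRatio.refl _⟩) a
      exact hinit.mul_of_monotoneRatio (fun _ _ hsr => hinit.cross hratio
        (monotone_simplexIntegral _ a) (fun u => simplexIntegral_ne_top hC (fun _ => hhC _) a u)
        hsr) (hgh _)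
    · simp only [update_self, Fin.init_update_last, mul_assoc]
      exact ((hgh _).mul (monotoneRatio_simplexIntegral (fun _ => hg _) (fun _ => hh _)
        (fun _ => hgh _) a)).symmRatioLE_mul_of_antitone hφ

end Induction

lemma simplexIntegral_update_indicator {m : ℕ} (g : Fin m → ℝ → ℝ≥0∞) (k : Fin m) {T : Set ℝ}
    (hT : MeasurableSet T) (a b : ℝ) :
    simplexIntegral m (update g k (T.indicator 1 * g k)) a b =
      ∫⁻ x in openSimplex m a b ∩ {x | x k ∈ T}, ∏ j, g j (x j) := by
  have hprod : ∀ x : Fin m → ℝ, ∏ j, update g k (T.indicator 1 * g k) j (x j) =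
      {x : Fin m → ℝ | x k ∈ T}.indicator (fun x => ∏ j, g j (x j)) x := by
    intro x
    have hfactor : ∀ j, update g k (T.indicator 1 * g k) j (x j) =
        (if j = k then T.indicator 1 (x k) else 1) * g j (x j) := by
      intro j
      rcases eq_or_ne j k with rfl | hj
      · simp
      · simp [hj]
    simp only [hfactor, Finset.prod_mul_distrib, Finset.prod_ite_eq', Finset.mem_univ, if_true]
    by_cases hx : x k ∈ T <;> simp [hx]
  have hE : MeasurableSet {x : Fin m → ℝ | x k ∈ T} := hT.preimage (measurable_pi_apply k)
  rw [simplexIntegral, lintegral_congr hprod, setLIntegral_indicator hE, inter_comm]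

section Application

lemma monotoneOn_sub_mul_of_le_deriv {f : ℝ → ℝ} {D : Set ℝ} (hD : Convex ℝ D)
    (hf : Differentiable ℝ f) {l : ℝ} (hl : ∀ s ∈ interior D, l ≤ deriv f s) :
    MonotoneOn (fun s => f s - l * s) D := by
  have hderiv : ∀ s, HasDerivAt (fun s => f s - l * s) (deriv f s - l) s := fun s =>
    ((hf s).hasDerivAt.sub ((hasDerivAt_id s).const_mul l)).congr_deriv (by rw [mul_one])
  refine monotoneOn_of_deriv_nonneg hD (fun s _ => (hderiv s).continuousAt.continuousWithinAt)
    (fun s _ => (hderiv s).differentiableAt.differentiableWithinAt) fun s hs => ?_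
  rw [(hderiv s).deriv, sub_nonneg]
  exact hl s hs

lemma monotoneRatio_ofReal_exp {ψ χ : ℝ → ℝ} (h : Monotone fun s => ψ s - χ s) :
    MonotoneRatio (fun s => ENNReal.ofReal (exp (ψ s))) (fun s => ENNReal.ofReal (exp (χ s))) := by
  intro u v huv
  simp only [← ENNReal.ofReal_mul (exp_pos _).le, ← exp_add]
  exact ENNReal.ofReal_le_ofReal (exp_le_exp.2 (by linarith [h huv]))

lemma antitone_indicator_Iic (t : ℝ) : Antitone ((Iic t).indicator (1 : ℝ → ℝ≥0∞)) := by
  intro u v huv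
  by_cases hv : v ≤ t
  · simp [indicator, hv, huv.trans hv]
  · simp [indicator, hv]

/-- The weight `exp ψ` on `[0, 1]`, extended by constants outside: the clamping makes
monotone-ratio properties hold on all of `ℝ` and changes nothing on the simplex. -/
noncomputable def expWeight (ψ : ℝ → ℝ) (s : ℝ) : ℝ≥0∞ :=
  ENNReal.ofReal (exp (ψ (projIcc (0 : ℝ) 1 zero_le_one s)))

lemma measurable_expWeight {ψ : ℝ → ℝ} (hψ : Continuous ψ) : Measurable (expWeight ψ) := by
  unfold expWeight
  fun_prop

lemma monotoneRatio_expWeight {f : ℝ → ℝ} (hf : Differentiable ℝ f) {l : ℝ}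
    (hl : ∀ s ∈ Icc (0 : ℝ) 1, l ≤ deriv f s) :
    MonotoneRatio (expWeight f) (expWeight (l * ·)) :=
  monotoneRatio_ofReal_exp fun u v huv =>
    monotoneOn_sub_mul_of_le_deriv (convex_Icc 0 1) hf (fun s hs => hl s (interior_subset hs))
      (projIcc _ _ _ u).2 (projIcc _ _ _ v).2 (monotone_projIcc _ huv)

lemma expWeight_mul_le (l s : ℝ) : expWeight (l * ·) s ≤ ENNReal.ofReal (exp |l|) := by
  have hs := (projIcc (0 : ℝ) 1 zero_le_one s).2
  refine ENNReal.ofReal_le_ofReal (exp_le_exp.2 ?_)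
  calc l * projIcc (0 : ℝ) 1 zero_le_one s ≤ |l| * projIcc (0 : ℝ) 1 zero_le_one s :=
        mul_le_mul_of_nonneg_right (le_abs_self l) hs.1
    _ ≤ |l| := mul_le_of_le_one_right (abs_nonneg l) hs.2

variable {n : ℕ}

lemma openSimplex_ae_eq_orderedSimplex (n : ℕ) :
    openSimplex n 0 1 =ᵐ[volume] orderedSimplex n := by
  refine (LE.le.eventuallyLE (show openSimplex n 0 1 ≤ orderedSimplex n from fun x hx =>
    ⟨fun j => Ioo_subset_Icc_self (hx.1 j), hx.2⟩)).antisymm ?_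
  have hne : ∀ᵐ x : Fin n → ℝ, ∀ j, x j ≠ 0 ∧ x j ≠ 1 := ae_all_iff.2 fun j =>
    (Measure.ae_eval_ne _ j 0).and (Measure.ae_eval_ne _ j 1)
  filter_upwards [hne] with x hx hmem
  exact ⟨fun j => ⟨(hmem.1 j).1.lt_of_ne (hx j).1.symm, (hmem.1 j).2.lt_of_ne (hx j).2⟩, hmem.2⟩

lemma integrableOn_orderedSimplex {f : (Fin n → ℝ) → ℝ} (hf : Continuous f) :
    IntegrableOn f (orderedSimplex n) :=
  (hf.continuousOn.integrableOn_compact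
    (isCompact_Icc (a := fun _ => 0) (b := fun _ => 1))).mono_set
      fun _ hx => ⟨fun j => (hx.1 j).1, fun j => (hx.1 j).2⟩

lemma setIntegral_exp_orderedSimplex_pos {F : (Fin n → ℝ) → ℝ} (hF : Continuous F) :
    0 < ∫ x in orderedSimplex n, exp (F x) := by
  have hvol : volume (orderedSimplex n) ≠ 0 := by
    rw [← measure_congr (openSimplex_ae_eq_orderedSimplex n)]
    exact ((isOpen_openSimplex n 0 1).measure_pos volume (openSimplex_nonempty n one_pos)).ne'
  have : NeZero (volume.restrict (orderedSimplex n)) := ⟨by rwa [Ne, Measure.restrict_eq_zero]⟩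
  exact integral_exp_pos (integrableOn_orderedSimplex (by fun_prop))

lemma ofReal_setIntegral_exp_sum_orderedSimplex {ψ : Fin n → ℝ → ℝ} (hψ : ∀ j, Continuous (ψ j))
    {E : Set (Fin n → ℝ)} (hE : MeasurableSet E) :
    ENNReal.ofReal (∫ x in orderedSimplex n ∩ E, exp (∑ j, ψ j (x j))) =
      ∫⁻ x in openSimplex n 0 1 ∩ E, ∏ j, expWeight (ψ j) (x j) := by
  rw [ofReal_integral_eq_lintegral_ofReal
      ((integrableOn_orderedSimplex (by fun_prop)).mono_set inter_subset_left)
      (ae_of_all _ fun _ => (exp_pos _).le),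
    ← setLIntegral_congr ((openSimplex_ae_eq_orderedSimplex n).inter (ae_eq_refl E))]
  refine setLIntegral_congr_fun ((isOpen_openSimplex n 0 1).measurableSet.inter hE) fun x hx => ?_
  rw [exp_sum, ENNReal.ofReal_prod_of_nonneg fun j _ => (exp_pos _).le]
  refine Finset.prod_congr rfl fun j _ => ?_
  rw [expWeight, projIcc_of_mem _ (Ioo_subset_Icc_self (hx.1.1 j))]

lemma div_le_div_of_ofReal_mul_le {a b c d : ℝ} (ha : 0 ≤ a) (hb : 0 < b) (hc : 0 ≤ c)
    (hd : 0 < d)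
    (h : ENNReal.ofReal a * ENNReal.ofReal d ≤ ENNReal.ofReal b * ENNReal.ofReal c) :
    a / b ≤ c / d := by
  rw [← ENNReal.ofReal_mul ha, ← ENNReal.ofReal_mul hb.le,
    ENNReal.ofReal_le_ofReal_iff (by positivity)] at h
  rw [div_le_div_iff₀ hb hd]
  linarith

lemma setIntegral_exp_sum_div_le {ψ χ : Fin n → ℝ → ℝ} (hψ : ∀ j, Continuous (ψ j))
    (hχ : ∀ j, Continuous (χ j)) {E : Set (Fin n → ℝ)} (hE : MeasurableSet E)
    (h : (∫⁻ x in openSimplex n 0 1 ∩ E, ∏ j, expWeight (ψ j) (x j)) *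
        simplexIntegral n (fun j => expWeight (χ j)) 0 1 ≤
      simplexIntegral n (fun j => expWeight (ψ j)) 0 1 *
        ∫⁻ x in openSimplex n 0 1 ∩ E, ∏ j, expWeight (χ j) (x j)) :
    (∫ x in orderedSimplex n ∩ E, exp (∑ j, ψ j (x j))) /
        (∫ x in orderedSimplex n, exp (∑ j, ψ j (x j))) ≤
      (∫ x in orderedSimplex n ∩ E, exp (∑ j, χ j (x j))) /
        ∫ x in orderedSimplex n, exp (∑ j, χ j (x j)) := by
  refine div_le_div_of_ofReal_mul_le (by positivity)
    (setIntegral_exp_orderedSimplex_pos (by fun_prop)) (by positivity)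
    (setIntegral_exp_orderedSimplex_pos (by fun_prop)) ?_
  have hψ₀ := ofReal_setIntegral_exp_sum_orderedSimplex hψ MeasurableSet.univ
  have hχ₀ := ofReal_setIntegral_exp_sum_orderedSimplex hχ MeasurableSet.univ
  simp only [inter_univ] at hψ₀ hχ₀
  rw [ofReal_setIntegral_exp_sum_orderedSimplex hψ hE,
    ofReal_setIntegral_exp_sum_orderedSimplex hχ hE, hψ₀, hχ₀]
  exact h

end Application

theorem stmt_9 (n : ℕ) (l : ℝ) (ξ : Fin n → ℝ → ℝ)
    (hC1 : ∀ j, ContDiff ℝ 1 (ξ j))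
    (hder : ∀ j, ∀ s ∈ Icc (0:ℝ) 1, l ≤ deriv (ξ j) s)
    (i : ℕ) (hi : 1 ≤ i) (hin : i ≤ n) (t : ℝ) :
    (∫ s in orderedSimplex n ∩ {s | s ⟨i - 1, by omega⟩ ≤ t},
        Real.exp (∑ j, ξ j (s j))) /
      (∫ s in orderedSimplex n, Real.exp (∑ j, ξ j (s j))) ≤
    (∫ s in orderedSimplex n ∩ {s | s ⟨i - 1, by omega⟩ ≤ t},
        Real.exp (l * ∑ j, s j)) /
      (∫ s in orderedSimplex n, Real.exp (l * ∑ j, s j)) := by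
  set k : Fin n := ⟨i - 1, by omega⟩
  have hξ : ∀ j, Continuous (ξ j) := fun j => (hC1 j).continuous
  have key := (symmRatioLE_simplexIntegral_update (g := fun j => expWeight (ξ j))
    (h := fun _ => expWeight (l * ·)) (fun j => measurable_expWeight (hξ j))
    (fun _ => measurable_expWeight (continuous_const_mul l))
    (fun j => monotoneRatio_expWeight ((hC1 j).differentiable one_ne_zero) (hder j))
    ENNReal.ofReal_ne_top (fun _ => expWeight_mul_le l) (measurable_one.indicator measurableSet_Iic)
    (antitone_indicator_Iic t) k 0).diag 1
  rw [simplexIntegral_update_indicator _ _ measurableSet_Iic,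
    simplexIntegral_update_indicator _ _ measurableSet_Iic] at key
  simp only [Finset.mul_sum]
  exact setIntegral_exp_sum_div_le hξ (fun _ => continuous_const_mul l)
    (measurableSet_le (measurable_pi_apply k) measurable_const) key
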